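/- Let $V, W$ be matrix regular operator spaces and suppose $V \otimes_\alpha W$ is a matrix regular operator space structure on $V \otimes W$ such that $\varphi \otimes \psi : V \otimes_\alpha W \to M_{kl}$ is completely positive and completely contractive for all c.c.p. maps $\varphi : V \to M_k$ and $\psi : W \to M_l$. Then $M_n(V \otimes_\alpha W)^+ \subseteq M_n(V \otimes_\delta W)^+$ and $\|z\|_\delta \le \|z\|_\alpha$ for all $z \in M_n(V \otimes W)$. -/

import Mathlib

open scoped TensorProduct ComplexConjugate ComplexOrder
open Matrix

noncomputable section

/-- Operator norm of a rectangular complex matrix (as an operator between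
Euclidean spaces). -/
def opN {m n : Type} [Fintype m] [Fintype n] [DecidableEq m] [DecidableEq n]
    (α : Matrix m n ℂ) : ℝ :=
  ‖LinearMap.toContinuousLinearMap (Matrix.toEuclideanLin α)‖

section ops

variable {V W : Type} [AddCommGroup V] [Module ℂ V]

/-- Left action of a scalar matrix on a `V`-valued matrix. -/
def mulL {ι κ κ' : Type} [Fintype κ] (α : Matrix ι κ ℂ) (v : Matrix κ κ' V) :
    Matrix ι κ' V := Matrix.of fun i j => ∑ p, α i p • v p j

/-- Right action of a scalar matrix on a `V`-valued matrix. -/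
def mulR {ι κ κ' : Type} [Fintype κ] (v : Matrix ι κ V) (β : Matrix κ κ' ℂ) :
    Matrix ι κ' V := Matrix.of fun i j => ∑ p, β p j • v i p

/-- `trip α v β = α * v * β`. -/
def trip {ι κ κ' ι' : Type} [Fintype κ] [Fintype κ'] (α : Matrix ι κ ℂ)
    (v : Matrix κ κ' V) (β : Matrix κ' ι' ℂ) : Matrix ι ι' V :=
  mulR (mulL α v) β

/-- Entrywise application of a linear map to a matrix. -/
def mapMat {ι ι' : Type} [AddCommGroup W] [Module ℂ W] (T : V →ₗ[ℂ] W)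
    (z : Matrix ι ι' V) : Matrix ι ι' W := Matrix.of fun i j => T (z i j)

/-- Amplification of a map into a matrix algebra. -/
def ampS {κ ι : Type} (T : V →ₗ[ℂ] Matrix κ κ ℂ) (z : Matrix ι ι V) :
    Matrix (ι × κ) (ι × κ) ℂ := Matrix.of fun a b => T (z a.1 b.1) a.2 b.2

end ops

/-- A matrix regular operator space: an operator space which is matrix ordered
with closed proper-compatible cones, satisfying Ruan's axioms and the two
regularity conditions.  Matrix levels are indexed by arbitrary finite index
types. -/
structure MROS (V : Type) [AddCommGroup V] [Module ℂ V] [StarAddMonoid V]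
    [StarModule ℂ V] where
  N : ∀ (ι : Type) [Fintype ι] [DecidableEq ι], Matrix ι ι V → ℝ
  pos : ∀ (ι : Type) [Fintype ι] [DecidableEq ι], Set (Matrix ι ι V)
  N_zero : ∀ (ι : Type) [Fintype ι] [DecidableEq ι] (v : Matrix ι ι V),
    N ι v = 0 ↔ v = 0
  N_add : ∀ (ι : Type) [Fintype ι] [DecidableEq ι] (v w : Matrix ι ι V),
    N ι (v + w) ≤ N ι v + N ι w
  N_smul : ∀ (ι : Type) [Fintype ι] [DecidableEq ι] (c : ℂ) (v : Matrix ι ι V),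
    N ι (c • v) = ‖c‖ * N ι v
  N_star : ∀ (ι : Type) [Fintype ι] [DecidableEq ι] (v : Matrix ι ι V),
    N ι vᴴ = N ι v
  ruan1 : ∀ (ι κ : Type) [Fintype ι] [DecidableEq ι] [Fintype κ] [DecidableEq κ]
    (α : Matrix ι κ ℂ) (v : Matrix κ κ V) (β : Matrix κ ι ℂ),
    N ι (trip α v β) ≤ opN α * N κ v * opN β
  ruan2 : ∀ (ι κ : Type) [Fintype ι] [DecidableEq ι] [Fintype κ] [DecidableEq κ]
    (v : Matrix ι ι V) (w : Matrix κ κ V),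
    N (ι ⊕ κ) (Matrix.fromBlocks v 0 0 w) = max (N ι v) (N κ w)
  pos_sa : ∀ (ι : Type) [Fintype ι] [DecidableEq ι] (v : Matrix ι ι V),
    v ∈ pos ι → vᴴ = v
  pos_add : ∀ (ι : Type) [Fintype ι] [DecidableEq ι] (v w : Matrix ι ι V),
    v ∈ pos ι → w ∈ pos ι → v + w ∈ pos ι
  pos_smul : ∀ (ι : Type) [Fintype ι] [DecidableEq ι] (c : ℝ) (v : Matrix ι ι V),
    0 ≤ c → v ∈ pos ι → (c : ℂ) • v ∈ pos ι
  pos_compress : ∀ (ι κ : Type) [Fintype ι] [DecidableEq ι] [Fintype κ]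
    [DecidableEq κ] (α : Matrix ι κ ℂ) (v : Matrix κ κ V),
    v ∈ pos κ → trip α v αᴴ ∈ pos ι
  pos_closed : ∀ (ι : Type) [Fintype ι] [DecidableEq ι] (z : Matrix ι ι V),
    (∀ ε : ℝ, 0 < ε → ∃ u ∈ pos ι, N ι (z - u) < ε) → z ∈ pos ι
  reg1 : ∀ (ι : Type) [Fintype ι] [DecidableEq ι] (v u : Matrix ι ι V),
    vᴴ = v → u ∈ pos ι → u - v ∈ pos ι → u + v ∈ pos ι → N ι v ≤ N ι u
  reg2 : ∀ (ι : Type) [Fintype ι] [DecidableEq ι] (v : Matrix ι ι V),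
    vᴴ = v → N ι v < 1 →
    ∃ u ∈ pos ι, N ι u < 1 ∧ u - v ∈ pos ι ∧ u + v ∈ pos ι

section maps

variable {V W : Type} [AddCommGroup V] [Module ℂ V] [StarAddMonoid V]
  [StarModule ℂ V] [AddCommGroup W] [Module ℂ W] [StarAddMonoid W]
  [StarModule ℂ W]

/-- The norm of a single element, via the first matrix level. -/
def nrm1 (MV : MROS V) (v : V) : ℝ := MV.N PUnit (Matrix.of fun _ _ => v)

/-- A map into a matrix algebra is completely positive. -/
def IsCPs (MV : MROS V) {κ : Type} [Fintype κ] [DecidableEq κ]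
    (φ : V →ₗ[ℂ] Matrix κ κ ℂ) : Prop :=
  ∀ (ι : Type) [Fintype ι] [DecidableEq ι], ∀ z ∈ MV.pos ι, (ampS φ z).PosSemidef

/-- A map into a matrix algebra is completely bounded (in particular
continuous). -/
def IsCBs (MV : MROS V) {κ : Type} [Fintype κ] [DecidableEq κ]
    (φ : V →ₗ[ℂ] Matrix κ κ ℂ) : Prop :=
  ∃ C : ℝ, ∀ (ι : Type) [Fintype ι] [DecidableEq ι] (z : Matrix ι ι V),
    opN (ampS φ z) ≤ C * MV.N ι z

/-- A map into a matrix algebra is completely contractive. -/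
def IsCCs (MV : MROS V) {κ : Type} [Fintype κ] [DecidableEq κ]
    (φ : V →ₗ[ℂ] Matrix κ κ ℂ) : Prop :=
  ∀ (ι : Type) [Fintype ι] [DecidableEq ι] (z : Matrix ι ι V),
    opN (ampS φ z) ≤ MV.N ι z

/-- A linear map between matrix regular operator spaces is completely
positive. -/
def IsCPm (MV : MROS V) (MW : MROS W) (T : V →ₗ[ℂ] W) : Prop :=
  ∀ (ι : Type) [Fintype ι] [DecidableEq ι], ∀ z ∈ MV.pos ι, mapMat T z ∈ MW.pos ι

/-- Completely bounded norm with respect to given matrix norm data. -/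
def cbWith (N1 : ∀ (ι : Type) [Fintype ι] [DecidableEq ι], Matrix ι ι V → ℝ)
    (N2 : ∀ (ι : Type) [Fintype ι] [DecidableEq ι], Matrix ι ι W → ℝ)
    (T : V →ₗ[ℂ] W) : ℝ :=
  sInf { C : ℝ | 0 ≤ C ∧ ∀ (ι : Type) [Fintype ι] [DecidableEq ι]
    (z : Matrix ι ι V), N2 ι (mapMat T z) ≤ C * N1 ι z }

/-- The completely bounded norm of a map between matrix regular operator
spaces. -/
def cbN (MV : MROS V) (MW : MROS W) (T : V →ₗ[ℂ] W) : ℝ := cbWith MV.N MW.N T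

/-- The adjoint map `T^*(v) = (T(v^*))^*`. -/
def adjMap (T : V →ₗ[ℂ] W) : V →ₗ[ℂ] W where
  toFun v := star (T (star v))
  map_add' v w := by simp [star_add, map_add]
  map_smul' c v := by simp [star_smul, _root_.map_smul]

/-- `T` is decomposable, witnessed by completely positive maps `S1`, `S2`,
relative to given cone data on domain and codomain. -/
def IsDecompW
    (P1 : ∀ (ι : Type) [Fintype ι] [DecidableEq ι], Set (Matrix ι ι V))
    (P2 : ∀ (ι : Type) [Fintype ι] [DecidableEq ι], Set (Matrix ι ι W))
    (T S1 S2 : V →ₗ[ℂ] W) : Prop :=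
  ∀ (ι : Type) [Fintype ι] [DecidableEq ι], ∀ v ∈ P1 ι,
    Matrix.fromBlocks (mapMat S1 v) (mapMat T v) (mapMat (adjMap T) v)
      (mapMat S2 v) ∈ P2 (ι ⊕ ι)

/-- `T` is decomposable. -/
def Decomp (MV : MROS V) (MW : MROS W) (T : V →ₗ[ℂ] W) : Prop :=
  ∃ S1 S2 : V →ₗ[ℂ] W, IsDecompW MV.pos MW.pos T S1 S2

/-- Operator norm (at the first level) of a linear map, with respect to given
level-one norms. -/
def op1With (n1 : V → ℝ) (n2 : W → ℝ) (T : V →ₗ[ℂ] W) : ℝ :=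
  sInf { C : ℝ | 0 ≤ C ∧ ∀ v : V, n2 (T v) ≤ C * n1 v }

/-- Decomposable norm with respect to given cone and norm data. -/
def decWith
    (P1 : ∀ (ι : Type) [Fintype ι] [DecidableEq ι], Set (Matrix ι ι V))
    (P2 : ∀ (ι : Type) [Fintype ι] [DecidableEq ι], Set (Matrix ι ι W))
    (n1 : V → ℝ) (n2 : W → ℝ) (T : V →ₗ[ℂ] W) : ℝ :=
  sInf { c : ℝ | ∃ S1 S2 : V →ₗ[ℂ] W, IsDecompW P1 P2 T S1 S2 ∧
    op1With n1 n2 S1 ≤ c ∧ op1With n1 n2 S2 ≤ c }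

/-- The decomposable norm of a map between matrix regular operator spaces. -/
def decN (MV : MROS V) (MW : MROS W) (T : V →ₗ[ℂ] W) : ℝ :=
  decWith MV.pos MW.pos (nrm1 MV) (nrm1 MW) T

end maps

section tensor

variable {V W : Type} [AddCommGroup V] [Module ℂ V] [StarAddMonoid V]
  [StarModule ℂ V] [AddCommGroup W] [Module ℂ W] [StarAddMonoid W]
  [StarModule ℂ W]

/-- The Kronecker product of a `V`-valued and a `W`-valued matrix, with values
in `V ⊗ W`. -/
def kron {ι κ : Type} (v : Matrix ι ι V) (w : Matrix κ κ W) :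
    Matrix (ι × κ) (ι × κ) (V ⊗[ℂ] W) :=
  Matrix.of fun a b => v a.1 b.1 ⊗ₜ[ℂ] w a.2 b.2

/-- The tensor product `φ ⊗ ψ : V ⊗ W → M_{k×l}` of two matrix-algebra valued
maps. -/
def pairMap {k l : Type} (φ : V →ₗ[ℂ] Matrix k k ℂ)
    (ψ : W →ₗ[ℂ] Matrix l l ℂ) :
    (V ⊗[ℂ] W) →ₗ[ℂ] Matrix (k × l) (k × l) ℂ :=
  TensorProduct.lift (LinearMap.mk₂ ℂ
    (fun v w => Matrix.of fun a b => φ v a.1 b.1 * ψ w a.2 b.2)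
    (fun v v' w => by
      ext a b
      simp [map_add, Matrix.add_apply, add_mul])
    (fun c v w => by
      ext a b
      simp [_root_.map_smul, Matrix.smul_apply, smul_eq_mul]
      ring)
    (fun v w w' => by
      ext a b
      simp [map_add, Matrix.add_apply, mul_add])
    (fun c v w => by
      ext a b
      simp [_root_.map_smul, Matrix.smul_apply, smul_eq_mul]
      ring))

variable (MV : MROS V) (MW : MROS W)

/-- The cone `M_ι(V ⊗_Δ W)_+` of elements `α (v ⊗ w) α^*` with `v, w`
positive. -/
def DeltaPos (ι : Type) [Fintype ι] [DecidableEq ι] :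
    Set (Matrix ι ι (V ⊗[ℂ] W)) :=
  { z | ∃ (k l : ℕ) (v : Matrix (Fin k) (Fin k) V)
      (w : Matrix (Fin l) (Fin l) W) (α : Matrix ι (Fin k × Fin l) ℂ),
      v ∈ MV.pos (Fin k) ∧ w ∈ MW.pos (Fin l) ∧ z = trip α (kron v w) αᴴ }

/-- `|z|_Δ` for `z ∈ M_ι(V ⊗_Δ W)_+`. -/
def DeltaAbs (ι : Type) [Fintype ι] [DecidableEq ι]
    (z : Matrix ι ι (V ⊗[ℂ] W)) : ℝ :=
  sInf { r : ℝ | ∃ (k l : ℕ) (v : Matrix (Fin k) (Fin k) V)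
    (w : Matrix (Fin l) (Fin l) W) (α : Matrix ι (Fin k × Fin l) ℂ),
    v ∈ MV.pos (Fin k) ∧ w ∈ MW.pos (Fin l) ∧ z = trip α (kron v w) αᴴ ∧
    r = opN α ^ 2 * MV.N (Fin k) v * MW.N (Fin l) w }

/-- The norm `‖z‖_Δ`. -/
def DeltaN [Star (V ⊗[ℂ] W)] (ι : Type) [Fintype ι] [DecidableEq ι]
    (z : Matrix ι ι (V ⊗[ℂ] W)) : ℝ :=
  sInf { r : ℝ | ∃ u u' : Matrix ι ι (V ⊗[ℂ] W),
    Matrix.fromBlocks u z zᴴ u' ∈ DeltaPos MV MW (ι ⊕ ι) ∧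
    r = max (DeltaAbs MV MW ι u) (DeltaAbs MV MW ι u') }

/-- The closed cone `M_ι(V ⊗_Δ W)^+` (closure of `M_ι(V ⊗_Δ W)_+` in
`‖·‖_Δ`). -/
def DeltaPosC [Star (V ⊗[ℂ] W)] (ι : Type) [Fintype ι] [DecidableEq ι] :
    Set (Matrix ι ι (V ⊗[ℂ] W)) :=
  { z | ∀ ε : ℝ, 0 < ε → ∃ u ∈ DeltaPos MV MW ι, DeltaN MV MW ι (z - u) < ε }

/-- The cone `M_ι(V ⊗_δ W)_+`: elements whose pairings with all continuous
completely positive maps into matrix algebras are positive semidefinite. -/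
def deltaPos (ι : Type) [Fintype ι] [DecidableEq ι] :
    Set (Matrix ι ι (V ⊗[ℂ] W)) :=
  { z | ∀ (k l : ℕ) (φ : V →ₗ[ℂ] Matrix (Fin k) (Fin k) ℂ)
      (ψ : W →ₗ[ℂ] Matrix (Fin l) (Fin l) ℂ),
      IsCPs MV φ → IsCBs MV φ → IsCPs MW ψ → IsCBs MW ψ →
      (ampS (pairMap φ ψ) z).PosSemidef }

/-- `|z|_δ` for `z ∈ M_ι(V ⊗_δ W)_+`. -/
def deltaAbs (ι : Type) [Fintype ι] [DecidableEq ι]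
    (z : Matrix ι ι (V ⊗[ℂ] W)) : ℝ :=
  sSup { r : ℝ | ∃ (k l : ℕ) (φ : V →ₗ[ℂ] Matrix (Fin k) (Fin k) ℂ)
    (ψ : W →ₗ[ℂ] Matrix (Fin l) (Fin l) ℂ),
    IsCPs MV φ ∧ IsCCs MV φ ∧ IsCPs MW ψ ∧ IsCCs MW ψ ∧
    r = opN (ampS (pairMap φ ψ) z) }

/-- The norm `‖z‖_δ`. -/
def deltaN [Star (V ⊗[ℂ] W)] (ι : Type) [Fintype ι] [DecidableEq ι]
    (z : Matrix ι ι (V ⊗[ℂ] W)) : ℝ :=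
  sInf { r : ℝ | ∃ u u' : Matrix ι ι (V ⊗[ℂ] W),
    Matrix.fromBlocks u z zᴴ u' ∈ deltaPos MV MW (ι ⊕ ι) ∧
    r = max (deltaAbs MV MW ι u) (deltaAbs MV MW ι u') }

/-- The closed cone `M_ι(V ⊗_δ W)^+`. -/
def deltaPosC [Star (V ⊗[ℂ] W)] (ι : Type) [Fintype ι] [DecidableEq ι] :
    Set (Matrix ι ι (V ⊗[ℂ] W)) :=
  { z | ∀ ε : ℝ, 0 < ε → ∃ u ∈ deltaPos MV MW ι, deltaN MV MW ι (z - u) < ε }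

/-- The injective operator space tensor norm `‖z‖_∨`: the supremum of pairings
with all pairs of complete contractions into matrix algebras. -/
def veeN (ι : Type) [Fintype ι] [DecidableEq ι]
    (z : Matrix ι ι (V ⊗[ℂ] W)) : ℝ :=
  sSup { r : ℝ | ∃ (k l : ℕ) (φ : V →ₗ[ℂ] Matrix (Fin k) (Fin k) ℂ)
    (ψ : W →ₗ[ℂ] Matrix (Fin l) (Fin l) ℂ),
    IsCCs MV φ ∧ IsCCs MW ψ ∧ r = opN (ampS (pairMap φ ψ) z) }

end tensor

section dual

variable {V : Type} [AddCommGroup V] [Module ℂ V] [StarAddMonoid V]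
  [StarModule ℂ V]

/-- The dual matrix cone on `M_ι(V^*)` : matrices of functionals which pair
positively with all positive matrices over `V`. -/
def dualPos (MV : MROS V) (ι : Type) [Fintype ι] [DecidableEq ι]
    (F : Matrix ι ι (V →ₗ[ℂ] ℂ)) : Prop :=
  ∀ (k : ℕ) (v : Matrix (Fin k) (Fin k) V), v ∈ MV.pos (Fin k) →
    (Matrix.of fun (a b : Fin k × ι) => F a.2 b.2 (v a.1 b.1)).PosSemidef

/-- The dual matrix norm on `M_ι(V^*)`. -/
def dualN (MV : MROS V) (ι : Type) [Fintype ι] [DecidableEq ι]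
    (F : Matrix ι ι (V →ₗ[ℂ] ℂ)) : ℝ :=
  sSup { r : ℝ | ∃ (k : ℕ) (v : Matrix (Fin k) (Fin k) V),
    MV.N (Fin k) v ≤ 1 ∧
    r = opN (Matrix.of fun (a b : Fin k × ι) => F a.2 b.2 (v a.1 b.1)) }

end dual

attribute [-instance] TensorProduct.instStar TensorProduct.instInvolutiveStar
  TensorProduct.instStarAddMonoid TensorProduct.instStarModule

section helpers

lemma bound_trip {a b n r : ℝ} (hr : r ≤ a * n * b) (ha : 0 ≤ a) (hb : 0 ≤ b)
    (ha1 : a ≤ 1) (hb1 : b ≤ 1) (hn : 0 ≤ n) : r ≤ n := by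
  nlinarith [mul_nonneg ha hn, mul_nonneg (sub_nonneg.mpr hb1) (mul_nonneg ha hn),
    mul_nonneg (sub_nonneg.mpr ha1) hn]


lemma opN_nonneg {m n : Type} [Fintype m] [Fintype n] [DecidableEq m] [DecidableEq n]
    (α : Matrix m n ℂ) : 0 ≤ opN α := norm_nonneg _

lemma opN_zero {m n : Type} [Fintype m] [Fintype n] [DecidableEq m] [DecidableEq n] :
    opN (0 : Matrix m n ℂ) = 0 := by simp [opN]

lemma opN_smul {m n : Type} [Fintype m] [Fintype n] [DecidableEq m] [DecidableEq n]
    (c : ℂ) (α : Matrix m n ℂ) : opN (c • α) = ‖c‖ * opN α := by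
  unfold opN
  rw [_root_.map_smul, _root_.map_smul]
  exact norm_smul c (LinearMap.toContinuousLinearMap (Matrix.toEuclideanLin α))

lemma opN_le_one {m n : Type} [Fintype m] [Fintype n] [DecidableEq m] [DecidableEq n]
    (α : Matrix m n ℂ)
    (h : ∀ x : n → ℂ, ∑ i, ‖α.mulVec x i‖ ^ 2 ≤ ∑ j, ‖x j‖ ^ 2) : opN α ≤ 1 := by
  apply ContinuousLinearMap.opNorm_le_bound _ zero_le_one
  intro x
  rw [one_mul, LinearMap.coe_toContinuousLinearMap']
  rw [EuclideanSpace.norm_eq, EuclideanSpace.norm_eq]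
  apply Real.sqrt_le_sqrt
  exact h ((WithLp.equiv 2 _) x)

lemma psd_smul {n : Type} [Fintype n] {M : Matrix n n ℂ} (hM : M.PosSemidef) {c : ℝ} (hc : 0 ≤ c) :
    ((c : ℂ) • M).PosSemidef := by
  constructor
  · unfold Matrix.IsHermitian
    rw [Matrix.conjTranspose_smul, hM.1]
    congr 1
    simp
  · intro x
    convert mul_nonneg (by exact_mod_cast hc : (0:ℂ) ≤ (c:ℂ)) (hM.2 x) using 1
    simp only [Finsupp.sum, Finset.mul_sum, Matrix.smul_apply, smul_eq_mul]
    exact Finset.sum_congr rfl fun _ _ => Finset.sum_congr rfl fun _ _ => by ring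

section val

variable {V : Type} [AddCommGroup V] [Module ℂ V]

lemma trip_apply {ι κ κ' ι' : Type} [Fintype κ] [Fintype κ']
    (α : Matrix ι κ ℂ) (v : Matrix κ κ' V) (β : Matrix κ' ι' ℂ) (i : ι) (j : ι') :
    trip α v β i j = ∑ q, ∑ p, (β q j * α i p) • v p q := by
  simp [trip, mulL, mulR, Finset.smul_sum, smul_smul]

/-- The selection matrix `[1 0] : ι → ι ⊕ ι`. -/
def selL (ι : Type) [DecidableEq ι] : Matrix ι (ι ⊕ ι) ℂ :=
  Matrix.of fun i p => if p = Sum.inl i then 1 else 0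

/-- The selection matrix `[0 1] : ι → ι ⊕ ι`. -/
def selR (ι : Type) [DecidableEq ι] : Matrix ι (ι ⊕ ι) ℂ :=
  Matrix.of fun i p => if p = Sum.inr i then 1 else 0

/-- The swap matrix on `ι ⊕ ι`. -/
def swapM (ι : Type) [DecidableEq ι] : Matrix (ι ⊕ ι) (ι ⊕ ι) ℂ :=
  Matrix.of fun p q => if p = Sum.swap q then 1 else 0

/-- The sign function `1` on the left summand, `-1` on the right. -/
def sg {ι : Type} : ι ⊕ ι → ℂ := Sum.elim (fun _ => (1 : ℂ)) fun _ => -1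

/-- The diagonal sign matrix `diag(1, -1)`. -/
def sgnM (ι : Type) [DecidableEq ι] : Matrix (ι ⊕ ι) (ι ⊕ ι) ℂ :=
  Matrix.of fun p q => if p = q then sg p else 0

lemma trip_one_swap {ι : Type} [Fintype ι] [DecidableEq ι] (M : Matrix (ι ⊕ ι) (ι ⊕ ι) V) :
    trip 1 M (swapM ι) = Matrix.of fun i j => M i (Sum.swap j) := by
  ext i j
  rw [trip_apply]
  simp only [swapM, Matrix.one_apply, Matrix.of_apply, mul_ite, ite_mul, one_mul, mul_one,
    mul_zero, zero_mul, ite_smul, zero_smul, Finset.sum_ite_eq, Finset.mem_univ, if_true]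
  simp [Finset.sum_ite_eq]

lemma trip_sgn {ι : Type} [Fintype ι] [DecidableEq ι] (M : Matrix (ι ⊕ ι) (ι ⊕ ι) V) :
    trip (sgnM ι) M (sgnM ι) = Matrix.of fun p q => (sg p * sg q) • M p q := by
  ext i j
  rw [trip_apply]
  simp only [sgnM, Matrix.of_apply, mul_ite, ite_mul, mul_zero, zero_mul, ite_smul, zero_smul]
  simp [Finset.sum_ite_eq, smul_smul, mul_comm]

lemma conjT_selL {ι : Type} [DecidableEq ι] :
    (selL ι)ᴴ = Matrix.of fun p i => if p = Sum.inl i then 1 else 0 := by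
  ext p i
  simp [selL, Matrix.conjTranspose_apply, apply_ite star]

lemma conjT_selR {ι : Type} [DecidableEq ι] :
    (selR ι)ᴴ = Matrix.of fun p i => if p = Sum.inr i then 1 else 0 := by
  ext p i
  simp [selR, Matrix.conjTranspose_apply, apply_ite star]

lemma conjT_sgn {ι : Type} [DecidableEq ι] : (sgnM ι)ᴴ = sgnM ι := by
  ext p q
  rcases eq_or_ne p q with rfl | hpq
  · simp [sgnM, Matrix.conjTranspose_apply, sg]
    rcases p with i | i <;> simp
  · simp [sgnM, Matrix.conjTranspose_apply, hpq, Ne.symm hpq]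

lemma trip_selL {ι : Type} [Fintype ι] [DecidableEq ι] (U : Matrix (ι ⊕ ι) (ι ⊕ ι) V) :
    trip (selL ι) U (selL ι)ᴴ = Matrix.of fun i j => U (Sum.inl i) (Sum.inl j) := by
  ext i j
  rw [trip_apply, conjT_selL]
  simp only [selL, Matrix.of_apply, mul_ite, ite_mul, mul_zero, zero_mul, one_mul, mul_one,
    ite_smul, zero_smul]
  simp [Finset.sum_ite_eq']

lemma trip_selR {ι : Type} [Fintype ι] [DecidableEq ι] (U : Matrix (ι ⊕ ι) (ι ⊕ ι) V) :
    trip (selR ι) U (selR ι)ᴴ = Matrix.of fun i j => U (Sum.inr i) (Sum.inr j) := by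
  ext i j
  rw [trip_apply, conjT_selR]
  simp only [selR, Matrix.of_apply, mul_ite, ite_mul, mul_zero, zero_mul, one_mul, mul_one,
    ite_smul, zero_smul]
  simp [Finset.sum_ite_eq']

end val

lemma opN_one_le {ι : Type} [Fintype ι] [DecidableEq ι] : opN (1 : Matrix ι ι ℂ) ≤ 1 := by
  apply opN_le_one
  intro x
  rw [Matrix.one_mulVec]

lemma opN_swap_le {ι : Type} [Fintype ι] [DecidableEq ι] : opN (swapM ι) ≤ 1 := by
  apply opN_le_one
  intro x
  have hmv : ∀ p, (swapM ι).mulVec x p = x (Sum.swap p) := by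
    intro p
    rcases p with i | i <;>
      simp [swapM, Matrix.mulVec, dotProduct, ite_mul, one_mul, zero_mul,
        Fintype.sum_sum_type, Finset.sum_ite_eq]
  simp only [hmv]
  rw [← Equiv.sum_comp (Equiv.sumComm ι ι) (fun p => ‖x p‖ ^ 2)]
  simp [Equiv.sumComm]

lemma opN_sgn_le {ι : Type} [Fintype ι] [DecidableEq ι] : opN (sgnM ι) ≤ 1 := by
  apply opN_le_one
  intro x
  have hmv : ∀ p, (sgnM ι).mulVec x p = sg p * x p := by
    intro p
    simp [sgnM, Matrix.mulVec, dotProduct, ite_mul, zero_mul, Finset.sum_ite_eq]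
  simp only [hmv]
  apply le_of_eq
  apply Finset.sum_congr rfl
  intro p _
  rcases p with i | i <;> simp [sg, norm_mul]

lemma opN_selL_le {ι : Type} [Fintype ι] [DecidableEq ι] : opN (selL ι) ≤ 1 := by
  apply opN_le_one
  intro x
  have hmv : ∀ i, (selL ι).mulVec x i = x (Sum.inl i) := by
    intro i
    simp [selL, Matrix.mulVec, dotProduct, ite_mul, one_mul, zero_mul,
      Finset.sum_ite_eq']
  simp only [hmv, Fintype.sum_sum_type]
  apply le_add_of_nonneg_right
  positivity

lemma opN_selR_le {ι : Type} [Fintype ι] [DecidableEq ι] : opN (selR ι) ≤ 1 := by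
  apply opN_le_one
  intro x
  have hmv : ∀ i, (selR ι).mulVec x i = x (Sum.inr i) := by
    intro i
    simp [selR, Matrix.mulVec, dotProduct, ite_mul, one_mul, zero_mul,
      Finset.sum_ite_eq']
  simp only [hmv, Fintype.sum_sum_type]
  apply le_add_of_nonneg_left
  positivity

lemma opN_selL_ct_le {ι : Type} [Fintype ι] [DecidableEq ι] : opN (selL ι)ᴴ ≤ 1 := by
  apply opN_le_one
  intro x
  have hmv : ∀ p, ((selL ι)ᴴ).mulVec x p = Sum.elim (fun i => x i) (fun _ => 0) p := by
    intro p
    rw [conjT_selL]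
    rcases p with i | i <;>
      simp [Matrix.mulVec, dotProduct, ite_mul, one_mul, zero_mul, Finset.sum_ite_eq]
  simp only [hmv, Fintype.sum_sum_type]
  simp

lemma opN_selR_ct_le {ι : Type} [Fintype ι] [DecidableEq ι] : opN (selR ι)ᴴ ≤ 1 := by
  apply opN_le_one
  intro x
  have hmv : ∀ p, ((selR ι)ᴴ).mulVec x p = Sum.elim (fun _ => 0) (fun i => x i) p := by
    intro p
    rw [conjT_selR]
    rcases p with i | i <;>
      simp [Matrix.mulVec, dotProduct, ite_mul, one_mul, zero_mul, Finset.sum_ite_eq]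
  simp only [hmv, Fintype.sum_sum_type]
  simp

section maps2

variable {V W : Type} [AddCommGroup V] [Module ℂ V] [AddCommGroup W] [Module ℂ W]

end maps2

section mros

variable {V W : Type} [AddCommGroup V] [Module ℂ V] [StarAddMonoid V]
  [StarModule ℂ V] [AddCommGroup W] [Module ℂ W] [StarAddMonoid W]
  [StarModule ℂ W] [StarAddMonoid (V ⊗[ℂ] W)] [StarModule ℂ (V ⊗[ℂ] W)]

set_option linter.unusedSectionVars false

lemma N_nonneg (M : MROS V) (ι : Type) [Fintype ι] [DecidableEq ι]
    (v : Matrix ι ι V) : 0 ≤ M.N ι v := by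
  have h0 : M.N ι (0 : Matrix ι ι V) = 0 := (M.N_zero ι 0).mpr rfl
  have hneg : M.N ι (-v) = M.N ι v := by
    have h := M.N_smul ι (-1) v
    rw [neg_one_smul] at h
    simpa using h
  have hadd := M.N_add ι v (-v)
  rw [add_neg_cancel, h0] at hadd
  linarith

lemma ampS_smul {κ ι : Type} (c : ℂ) (T : V →ₗ[ℂ] Matrix κ κ ℂ) (z : Matrix ι ι V) :
    ampS (c • T) z = c • ampS T z := by
  ext a b
  simp [ampS]

lemma ampS_zero_mat {κ ι : Type} (T : V →ₗ[ℂ] Matrix κ κ ℂ) :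
    ampS T (0 : Matrix ι ι V) = 0 := by
  ext a b
  simp [ampS]

lemma pairMap_tmul {k l : Type} (φ : V →ₗ[ℂ] Matrix k k ℂ) (ψ : W →ₗ[ℂ] Matrix l l ℂ)
    (v : V) (w : W) :
    pairMap φ ψ (v ⊗ₜ[ℂ] w) = Matrix.of fun a b => φ v a.1 b.1 * ψ w a.2 b.2 := by
  simp [pairMap]

lemma pairMap_smul_left {k l : Type} (c : ℂ) (φ : V →ₗ[ℂ] Matrix k k ℂ)
    (ψ : W →ₗ[ℂ] Matrix l l ℂ) :
    pairMap (c • φ) ψ = c • pairMap φ ψ := by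
  apply TensorProduct.ext'
  intro v w
  ext a b
  simp [pairMap_tmul, mul_assoc]

lemma pairMap_smul_right {k l : Type} (c : ℂ) (φ : V →ₗ[ℂ] Matrix k k ℂ)
    (ψ : W →ₗ[ℂ] Matrix l l ℂ) :
    pairMap φ (c • ψ) = c • pairMap φ ψ := by
  apply TensorProduct.ext'
  intro v w
  ext a b
  simp [pairMap_tmul]
  ring

lemma key1 (MV : MROS V) (MW : MROS W) (A : MROS (V ⊗[ℂ] W))
    (h : ∀ (k l : ℕ) (φ : V →ₗ[ℂ] Matrix (Fin k) (Fin k) ℂ)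
      (ψ : W →ₗ[ℂ] Matrix (Fin l) (Fin l) ℂ),
      IsCPs MV φ → IsCCs MV φ → IsCPs MW ψ → IsCCs MW ψ →
      IsCPs A (pairMap φ ψ) ∧ IsCCs A (pairMap φ ψ))
    {ι : Type} [Fintype ι] [DecidableEq ι] {z : Matrix ι ι (V ⊗[ℂ] W)}
    (hz : z ∈ A.pos ι) : z ∈ deltaPos MV MW ι := by
  intro k l φ ψ hφp hφb hψp hψb
  obtain ⟨C, hC⟩ := hφb
  obtain ⟨D, hD⟩ := hψb
  set c := max C 1 with hcdef
  set d := max D 1 with hddef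
  have hc1 : (1 : ℝ) ≤ c := le_max_right _ _
  have hd1 : (1 : ℝ) ≤ d := le_max_right _ _
  have hc0 : 0 < c := lt_of_lt_of_le one_pos hc1
  have hd0 : 0 < d := lt_of_lt_of_le one_pos hd1
  have hφp' : IsCPs MV (((c⁻¹ : ℝ) : ℂ) • φ) := by
    intro ι' _ _ v hv
    rw [ampS_smul]
    exact psd_smul (hφp ι' v hv) (by positivity)
  have hφc' : IsCCs MV (((c⁻¹ : ℝ) : ℂ) • φ) := by
    intro ι' _ _ v
    rw [ampS_smul, opN_smul, Complex.norm_real, Real.norm_eq_abs,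
      abs_of_pos (by positivity : (0:ℝ) < c⁻¹)]
    have h1 := hC ι' v
    have h2 : C * MV.N ι' v ≤ c * MV.N ι' v :=
      mul_le_mul_of_nonneg_right (le_max_left _ _) (N_nonneg _ _ _)
    calc c⁻¹ * opN (ampS φ v) ≤ c⁻¹ * (c * MV.N ι' v) := by
          apply mul_le_mul_of_nonneg_left (le_trans h1 h2) (by positivity)
      _ = MV.N ι' v := by field_simp
  have hψp' : IsCPs MW (((d⁻¹ : ℝ) : ℂ) • ψ) := by
    intro ι' _ _ v hv
    rw [ampS_smul]
    exact psd_smul (hψp ι' v hv) (by positivity)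
  have hψc' : IsCCs MW (((d⁻¹ : ℝ) : ℂ) • ψ) := by
    intro ι' _ _ v
    rw [ampS_smul, opN_smul, Complex.norm_real, Real.norm_eq_abs,
      abs_of_pos (by positivity : (0:ℝ) < d⁻¹)]
    have h1 := hD ι' v
    have h2 : D * MW.N ι' v ≤ d * MW.N ι' v :=
      mul_le_mul_of_nonneg_right (le_max_left _ _) (N_nonneg _ _ _)
    calc d⁻¹ * opN (ampS ψ v) ≤ d⁻¹ * (d * MW.N ι' v) := by
          apply mul_le_mul_of_nonneg_left (le_trans h1 h2) (by positivity)
      _ = MW.N ι' v := by field_simp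
  obtain ⟨hcp, -⟩ := h k l _ _ hφp' hφc' hψp' hψc'
  have hpsd := hcp ι z hz
  have heq : ((c * d : ℝ) : ℂ) • ampS (pairMap (((c⁻¹ : ℝ) : ℂ) • φ) (((d⁻¹ : ℝ) : ℂ) • ψ)) z
      = ampS (pairMap φ ψ) z := by
    rw [pairMap_smul_left, pairMap_smul_right, ampS_smul, ampS_smul, smul_smul, smul_smul]
    have hco : ((c * d : ℝ) : ℂ) * ((c⁻¹ : ℝ) : ℂ) * ((d⁻¹ : ℝ) : ℂ) = 1 := by
      push_cast
      field_simp
    rw [hco, one_smul]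
  rw [← heq]
  exact psd_smul hpsd (by positivity)

lemma deltaAbs_nonneg (MV : MROS V) (MW : MROS W) (ι : Type) [Fintype ι] [DecidableEq ι]
    (u : Matrix ι ι (V ⊗[ℂ] W)) : 0 ≤ deltaAbs MV MW ι u := by
  apply Real.sSup_nonneg
  rintro r ⟨k, l, φ, ψ, -, -, -, -, rfl⟩
  exact opN_nonneg _

lemma deltaAbs_le (MV : MROS V) (MW : MROS W) (A : MROS (V ⊗[ℂ] W))
    (h : ∀ (k l : ℕ) (φ : V →ₗ[ℂ] Matrix (Fin k) (Fin k) ℂ)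
      (ψ : W →ₗ[ℂ] Matrix (Fin l) (Fin l) ℂ),
      IsCPs MV φ → IsCCs MV φ → IsCPs MW ψ → IsCCs MW ψ →
      IsCPs A (pairMap φ ψ) ∧ IsCCs A (pairMap φ ψ))
    (ι : Type) [Fintype ι] [DecidableEq ι] (u : Matrix ι ι (V ⊗[ℂ] W)) :
    deltaAbs MV MW ι u ≤ A.N ι u := by
  apply Real.sSup_le _ (N_nonneg A ι u)
  rintro r ⟨k, l, φ, ψ, hφp, hφc, hψp, hψc, rfl⟩
  exact (h k l φ ψ hφp hφc hψp hψc).2 ι u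

lemma deltaN_bdd (MV : MROS V) (MW : MROS W)
    (ι : Type) [Fintype ι] [DecidableEq ι] (z : Matrix ι ι (V ⊗[ℂ] W)) :
    BddBelow { r : ℝ | ∃ u u' : Matrix ι ι (V ⊗[ℂ] W),
      Matrix.fromBlocks u z zᴴ u' ∈ deltaPos MV MW (ι ⊕ ι) ∧
      r = max (deltaAbs MV MW ι u) (deltaAbs MV MW ι u') } := by
  refine ⟨0, ?_⟩
  rintro r ⟨u, u', -, rfl⟩
  exact le_trans (deltaAbs_nonneg MV MW ι u) (le_max_left _ _)

lemma deltaN_zero_le (MV : MROS V) (MW : MROS W)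
    (ι : Type) [Fintype ι] [DecidableEq ι] :
    deltaN MV MW ι (0 : Matrix ι ι (V ⊗[ℂ] W)) ≤ 0 := by
  have habs : deltaAbs MV MW ι (0 : Matrix ι ι (V ⊗[ℂ] W)) ≤ 0 := by
    apply Real.sSup_le _ le_rfl
    rintro r ⟨k, l, φ, ψ, -, -, -, -, rfl⟩
    rw [ampS_zero_mat, opN_zero]
  have hmem : (0 : Matrix ι ι (V ⊗[ℂ] W)) ∈ deltaPos MV MW ι →
      Matrix.fromBlocks (0 : Matrix ι ι (V ⊗[ℂ] W)) 0 (0 : Matrix ι ι (V ⊗[ℂ] W))ᴴ 0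
        ∈ deltaPos MV MW (ι ⊕ ι) := by
    intro _
    rw [Matrix.conjTranspose_zero, Matrix.fromBlocks_zero]
    intro k l φ ψ hφp hφb hψp hψb
    rw [ampS_zero_mat]
    exact Matrix.PosSemidef.zero
  have hz : (0 : Matrix ι ι (V ⊗[ℂ] W)) ∈ deltaPos MV MW ι := by
    intro k l φ ψ hφp hφb hψp hψb
    rw [ampS_zero_mat]
    exact Matrix.PosSemidef.zero
  have h1 := csInf_le (deltaN_bdd MV MW ι (0 : Matrix ι ι (V ⊗[ℂ] W)))
    (Set.mem_setOf.mpr ⟨0, 0, hmem hz, rfl⟩)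
  refine le_trans h1 ?_
  simp only [max_self]
  exact habs

end mros

end helpers

set_option maxHeartbeats 1000000

/-- The δ-tensor product is the smallest matrix regular operator space
structure on `V ⊗ W` for which `φ ⊗ ψ` is completely positive and completely
contractive for all c.c.p. maps `φ`, `ψ` into matrix algebras. -/
theorem stmt_11 {V W : Type} [AddCommGroup V] [Module ℂ V] [StarAddMonoid V]
    [StarModule ℂ V] [AddCommGroup W] [Module ℂ W] [StarAddMonoid W]
    [StarModule ℂ W] [StarAddMonoid (V ⊗[ℂ] W)] [StarModule ℂ (V ⊗[ℂ] W)]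
    (hst : ∀ (v : V) (w : W), star (v ⊗ₜ[ℂ] w) = star v ⊗ₜ[ℂ] star w)
    (MV : MROS V) (MW : MROS W)
    (A : MROS (V ⊗[ℂ] W))
    (h : ∀ (k l : ℕ) (φ : V →ₗ[ℂ] Matrix (Fin k) (Fin k) ℂ)
      (ψ : W →ₗ[ℂ] Matrix (Fin l) (Fin l) ℂ),
      IsCPs MV φ → IsCCs MV φ → IsCPs MW ψ → IsCCs MW ψ →
      IsCPs A (pairMap φ ψ) ∧ IsCCs A (pairMap φ ψ)) :
    (∀ (ι : Type) [Fintype ι] [DecidableEq ι],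
      A.pos ι ⊆ deltaPosC MV MW ι) ∧
    (∀ (ι : Type) [Fintype ι] [DecidableEq ι] (z : Matrix ι ι (V ⊗[ℂ] W)),
      deltaN MV MW ι z ≤ A.N ι z) := by
  constructor
  · intro ι _ _ z hz
    intro ε hε
    refine ⟨z, key1 MV MW A h hz, ?_⟩
    rw [sub_self]
    exact lt_of_le_of_lt (deltaN_zero_le MV MW ι) hε
  · intro ι _ _ z
    apply le_of_forall_pos_le_add
    intro ε hε
    have hNz := N_nonneg A ι z
    set t : ℝ := A.N ι z + ε with htdef
    have ht : 0 < t := by positivity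
    set Zh : Matrix (ι ⊕ ι) (ι ⊕ ι) (V ⊗[ℂ] W) := Matrix.fromBlocks 0 z zᴴ 0 with hZhdef
    have hZh_sa : Zhᴴ = Zh := by
      rw [hZhdef, Matrix.fromBlocks_conjTranspose, Matrix.conjTranspose_zero,
        Matrix.conjTranspose_conjTranspose]
    have hNZh : A.N (ι ⊕ ι) Zh ≤ A.N ι z := by
      have hswap : trip (1 : Matrix (ι ⊕ ι) (ι ⊕ ι) ℂ) (Matrix.fromBlocks z 0 0 zᴴ)
          (swapM ι) = Zh := by
        rw [trip_one_swap]
        ext p q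
        rcases p with i | i <;> rcases q with j | j <;>
          simp [hZhdef, Matrix.fromBlocks]
      have h1 := A.ruan1 (ι ⊕ ι) (ι ⊕ ι) 1 (Matrix.fromBlocks z 0 0 zᴴ) (swapM ι)
      rw [hswap] at h1
      have h2 : A.N (ι ⊕ ι) (Matrix.fromBlocks z 0 0 zᴴ) = A.N ι z := by
        rw [A.ruan2, A.N_star, max_self]
      rw [h2] at h1
      have ho1 : opN (1 : Matrix (ι ⊕ ι) (ι ⊕ ι) ℂ) ≤ 1 := opN_one_le
      have ho2 : opN (swapM ι) ≤ 1 := opN_swap_le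
      exact bound_trip h1 (opN_nonneg _) (opN_nonneg _) ho1 ho2 hNz
    have hsa : (((t⁻¹ : ℝ) : ℂ) • Zh)ᴴ = ((t⁻¹ : ℝ) : ℂ) • Zh := by
      rw [Matrix.conjTranspose_smul, hZh_sa]
      congr 1
      simp [Complex.star_def, Complex.conj_ofReal]
    have hlt : A.N (ι ⊕ ι) (((t⁻¹ : ℝ) : ℂ) • Zh) < 1 := by
      rw [A.N_smul, Complex.norm_real, Real.norm_eq_abs,
        abs_of_pos (by positivity : (0:ℝ) < t⁻¹)]
      have hZt : A.N (ι ⊕ ι) Zh < t := lt_of_le_of_lt hNZh (by rw [htdef]; linarith)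
      calc t⁻¹ * A.N (ι ⊕ ι) Zh < t⁻¹ * t := by
            exact mul_lt_mul_of_pos_left hZt (by positivity)
        _ = 1 := by field_simp
    obtain ⟨u, hu_pos, hu_norm, hsub, hadd⟩ := A.reg2 (ι ⊕ ι) _ hsa hlt
    set U : Matrix (ι ⊕ ι) (ι ⊕ ι) (V ⊗[ℂ] W) := ((t : ℝ) : ℂ) • u with hUdef
    have hinv : ((t : ℝ) : ℂ) • (((t⁻¹ : ℝ) : ℂ) • Zh) = Zh := by
      rw [smul_smul, ← Complex.ofReal_mul, mul_inv_cancel₀ ht.ne', Complex.ofReal_one, one_smul]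
    have hUsub : U - Zh ∈ A.pos (ι ⊕ ι) := by
      have h5 := A.pos_smul (ι ⊕ ι) t _ ht.le hsub
      rwa [smul_sub, hinv] at h5
    have hUadd : U + Zh ∈ A.pos (ι ⊕ ι) := by
      have h5 := A.pos_smul (ι ⊕ ι) t _ ht.le hadd
      rwa [smul_add, hinv] at h5
    have hNU : A.N (ι ⊕ ι) U < t := by
      rw [hUdef, A.N_smul, Complex.norm_real, Real.norm_eq_abs, abs_of_pos ht]
      calc t * A.N (ι ⊕ ι) u < t * 1 := mul_lt_mul_of_pos_left hu_norm ht
        _ = t := mul_one t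
    set U11 : Matrix ι ι (V ⊗[ℂ] W) :=
      Matrix.of fun i j => U (Sum.inl i) (Sum.inl j) with hU11
    set U22 : Matrix ι ι (V ⊗[ℂ] W) :=
      Matrix.of fun i j => U (Sum.inr i) (Sum.inr j) with hU22
    have hPeq : Matrix.fromBlocks U11 z zᴴ U22
        = ((2⁻¹ : ℝ) : ℂ) • ((U + Zh) + trip (sgnM ι) (U - Zh) (sgnM ι)) := by
      rw [trip_sgn]
      ext p q
      rcases p with i | i <;> rcases q with j | j <;>
        (simp [hZhdef, hU11, hU22, Matrix.fromBlocks, sg, Matrix.smul_apply,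
          Matrix.add_apply, Matrix.sub_apply]) <;> module
    have hP : Matrix.fromBlocks U11 z zᴴ U22 ∈ A.pos (ι ⊕ ι) := by
      rw [hPeq]
      have h3 : trip (sgnM ι) (U - Zh) (sgnM ι) ∈ A.pos (ι ⊕ ι) := by
        have h4 := A.pos_compress (ι ⊕ ι) (ι ⊕ ι) (sgnM ι) (U - Zh) hUsub
        rwa [conjT_sgn] at h4
      exact A.pos_smul (ι ⊕ ι) 2⁻¹ _ (by norm_num) (A.pos_add (ι ⊕ ι) _ _ hUadd h3)
    have h6 : deltaN MV MW ι z ≤ max (deltaAbs MV MW ι U11) (deltaAbs MV MW ι U22) :=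
      csInf_le (deltaN_bdd MV MW ι z) ⟨U11, U22, key1 MV MW A h hP, rfl⟩
    have h7 : A.N ι U11 ≤ A.N (ι ⊕ ι) U := by
      have h8 := A.ruan1 ι (ι ⊕ ι) (selL ι) U (selL ι)ᴴ
      rw [trip_selL, ← hU11] at h8
      exact bound_trip h8 (opN_nonneg _) (opN_nonneg _) opN_selL_le opN_selL_ct_le
        (N_nonneg A (ι ⊕ ι) U)
    have h9 : A.N ι U22 ≤ A.N (ι ⊕ ι) U := by
      have h8 := A.ruan1 ι (ι ⊕ ι) (selR ι) U (selR ι)ᴴ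
      rw [trip_selR, ← hU22] at h8
      exact bound_trip h8 (opN_nonneg _) (opN_nonneg _) opN_selR_le opN_selR_ct_le
        (N_nonneg A (ι ⊕ ι) U)
    have h10 : deltaAbs MV MW ι U11 ≤ A.N ι U11 := deltaAbs_le MV MW A h ι U11
    have h11 : deltaAbs MV MW ι U22 ≤ A.N ι U22 := deltaAbs_le MV MW A h ι U22
    have h12 : max (deltaAbs MV MW ι U11) (deltaAbs MV MW ι U22) ≤ A.N (ι ⊕ ι) U :=
      max_le (le_trans h10 h7) (le_trans h11 h9)
    linarith
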